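/- Let M ⊆ ℤ×ℤ be finite with G_Δ|_M connected and hole-free, let g,g' ∈ M, let q ∈ {x,y,z}, let d_q := d_{M,q}(g,g'), and let P_q := {v ∈ M : d_{M,q}(g,v) = ⌈d_q/2⌉ and d_{M,q}(g',v) = ⌊d_q/2⌋}. Then every path from g to g' in the induced subgraph G_Δ|_M contains at least one vertex of P_q. -/

import Mathlib

/-!
The `e`-portal graph of a finite hole-free `M` is a tree. In a tree a shortest path between two
vertices lies inside every walk between them, so the portal projection of any `g`–`g'` walk passes
through the middle portal of a shortest portal path from `g` to `g'`, and the vertices of the walk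
in that portal lie in `P_q`.

Acyclicity is proved for horizontal portals; the two other directions are carried to this one by
symmetries of the grid. Take the topmost, then rightmost, point of the portals of a portal cycle.
Its portal `P` has two cycle neighbours in the row below, and the rest of the cycle joins them
without meeting the row of `P` to the right of `P`'s left end. Closing up through `P` gives a
closed walk in `M` that winds once around a point missing from `M` between the two neighbours.
Since `M` is hole-free, that point is joined outside `M` to points far away, where the winding
number vanishes, and the winding number is constant along such a join.
-/

open SimpleGraph

/-- The infinite triangular grid graph on `ℤ × ℤ`. -/
def triGrid : SimpleGraph (ℤ × ℤ) where
  Adj u v := u - v = (1, 0) ∨ u - v = (-1, 0) ∨ u - v = (0, 1) ∨ u - v = (0, -1) ∨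
    u - v = (1, -1) ∨ u - v = (-1, 1)
  symm := by
    constructor
    intro u v h
    have hvu : v - u = -(u - v) := by ring
    rcases h with h | h | h | h | h | h <;> rw [hvu, h] <;> simp [Prod.ext_iff]
  loopless := by
    constructor
    intro u h
    simp [Prod.ext_iff] at h

/-- A finite set is hole-free (simple) if every connected component of the complement
is infinite, i.e., there are no inner holes. -/
def HoleFree (S : Set (ℤ × ℤ)) : Prop :=
  ∀ C : (triGrid.induce Sᶜ).ConnectedComponent, C.supp.Infinite

/-- The graph on `V` whose edges are the edges of the induced grid graph in direction `±e`. -/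
def portalLineGraph (V : Set (ℤ × ℤ)) (e : ℤ × ℤ) : SimpleGraph V where
  Adj u v := triGrid.Adj u v ∧ ((u : ℤ × ℤ) - v = e ∨ (v : ℤ × ℤ) - u = e)
  symm := ⟨fun u v ⟨h, h'⟩ => ⟨h.symm, h'.symm⟩⟩
  loopless := ⟨fun u ⟨h, _⟩ => triGrid.ne_of_adj h rfl⟩

/-- The `e`-portals of the induced subgraph on `V`: connected components of `portalLineGraph`. -/
abbrev Portal (V : Set (ℤ × ℤ)) (e : ℤ × ℤ) := (portalLineGraph V e).ConnectedComponent

/-- The portal containing a given vertex. -/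
def portalMk (V : Set (ℤ × ℤ)) (e : ℤ × ℤ) (u : V) : Portal V e :=
  (portalLineGraph V e).connectedComponentMk u

/-- The `e`-portal graph: vertices are the `e`-portals, two portals being adjacent iff
some edge of the induced grid graph joins them. -/
def portalGraph (V : Set (ℤ × ℤ)) (e : ℤ × ℤ) : SimpleGraph (Portal V e) where
  Adj P Q := P ≠ Q ∧ ∃ u v : V, (triGrid.induce V).Adj u v ∧
    portalMk V e u = P ∧ portalMk V e v = Q
  symm := ⟨fun P Q ⟨hne, u, v, h, hu, hv⟩ => ⟨hne.symm, v, u, h.symm, hv, hu⟩⟩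
  loopless := ⟨fun P h => h.1 rfl⟩

/-- Distance between the portals of `u` and `v` in the `e`-portal graph. -/
noncomputable def portalDist (V : Set (ℤ × ℤ)) (e : ℤ × ℤ) (u v : V) : ℕ :=
  (portalGraph V e).dist (portalMk V e u) (portalMk V e v)

/-- A set `P` is an `e`-portal of the induced subgraph on `V` (as a set of grid points). -/
def IsPortal (V : Set (ℤ × ℤ)) (e : ℤ × ℤ) (P : Set (ℤ × ℤ)) : Prop :=
  ∃ C : Portal V e, P = Subtype.val '' C.supp

/-- `R` is geodesically convex in the subgraph induced on `V`: for all `u, v ∈ R`,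
every shortest `u`–`v` path in the induced graph stays inside `R`. -/
def GeodesicallyConvex (V R : Set (ℤ × ℤ)) : Prop :=
  ∀ u v : V, (u : ℤ × ℤ) ∈ R → (v : ℤ × ℤ) ∈ R →
    ∀ p : (triGrid.induce V).Walk u v, p.length = (triGrid.induce V).dist u v →
      ∀ w ∈ p.support, (w : ℤ × ℤ) ∈ R

namespace SimpleGraph

variable {V : Type*} {G : SimpleGraph V}

lemma Walk.sum_map_darts_eq_sub {u v : V} (p : G.Walk u v) (f : G.Dart → ℤ) (F : V → ℤ)
    (hf : ∀ d ∈ p.darts, f d = F d.snd - F d.fst) : (p.darts.map f).sum = F v - F u := by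
  induction p with
  | nil => simp
  | cons h p ih =>
    rw [Walk.darts_cons, List.map_cons, List.sum_cons, hf _ List.mem_cons_self,
      ih fun d hd => hf d (List.mem_cons_of_mem _ hd)]
    ring

lemma Walk.IsCycle.exists_adj_adj_walk {u v : V} {c : G.Walk u u} (hc : c.IsCycle)
    (hv : v ∈ c.support) :
    ∃ b d, G.Adj v b ∧ G.Adj d v ∧ b ≠ d ∧
      ∃ r : G.Walk b d, ∀ x ∈ r.support, x ∈ c.support ∧ x ≠ v := by
  classical
  have hrot := hc.rotate hv
  have hsupp : ∀ x ∈ (c.rotate v hv).support, x ∈ c.support := fun x hx =>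
    (mem_support_rotate_iff c v hv).mp hx
  generalize c.rotate v hv = c' at hrot hsupp
  cases c' with
  | nil => exact absurd hrot not_isCycle_nil
  | cons h₁ q =>
    rw [cons_isCycle_iff] at hrot
    cases q with
    | nil => exact (h₁.ne rfl).elim
    | cons h' q =>
      obtain ⟨d, r, h₂, hq⟩ := exists_cons_eq_concat h' q
      rw [hq, concat_isPath_iff] at hrot
      rw [hq, support_cons, support_concat] at hsupp
      refine ⟨_, d, h₁, h₂, ?_, r, fun x hx => ⟨hsupp x ?_, ?_⟩⟩
      · rintro rfl
        rw [(isPath_iff_nil.mp hrot.1.1).eq_nil] at hrot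
        simp [Sym2.eq_swap] at hrot
      · simp [hx]
      · rintro rfl
        exact hrot.1.2 hx

lemma IsAcyclic.support_subset_support_of_isPath (h : G.IsAcyclic) {u v : V} {p : G.Walk u v}
    (hp : p.IsPath) (q : G.Walk u v) : p.support ⊆ q.support := by
  classical
  obtain rfl : p = q.bypass := congrArg Subtype.val
    ((h.subsingleton_path u v).elim ⟨p, hp⟩ ⟨q.bypass, q.bypass_isPath⟩)
  exact q.support_bypass_subset_support

lemma Walk.dist_getVert_of_length_eq_dist {u v : V} (p : G.Walk u v) (hp : p.length = G.dist u v)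
    {k : ℕ} (hk : k ≤ p.length) :
    G.dist u (p.getVert k) = k ∧ G.dist (p.getVert k) v = G.dist u v - k := by
  have h₁ : G.dist u (p.getVert k) ≤ k := (dist_le (p.take k)).trans (by simp [take_length])
  have h₂ : G.dist (p.getVert k) v ≤ p.length - k :=
    (dist_le (p.drop k)).trans (by simp [drop_length])
  have h₃ := (p.take k).reachable.dist_triangle_left v
  omega

end SimpleGraph

lemma triGrid_adj_iff {u v : ℤ × ℤ} : triGrid.Adj u v ↔
    (u.1 = v.1 + 1 ∧ u.2 = v.2) ∨ (u.1 + 1 = v.1 ∧ u.2 = v.2) ∨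
    (u.1 = v.1 ∧ u.2 = v.2 + 1) ∨ (u.1 = v.1 ∧ u.2 + 1 = v.2) ∨
    (u.1 = v.1 + 1 ∧ u.2 + 1 = v.2) ∨ (u.1 + 1 = v.1 ∧ u.2 = v.2 + 1) := by
  simp only [triGrid, Prod.ext_iff, Prod.fst_sub, Prod.snd_sub]
  omega

/-- The signed crossing of the edge `u → v` with a horizontal ray leaving `z` to the right at
height `z.2 + 1/2`: an edge from row `z.2` to row `z.2 + 1` crosses it iff its lower endpoint
lies strictly to the right of `z`, and counts `+1` upwards, `-1` downwards. -/
def rayCrossing (z u v : ℤ × ℤ) : ℤ :=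
  if u.2 = z.2 ∧ v.2 = z.2 + 1 ∧ z.1 < u.1 then 1
  else if v.2 = z.2 ∧ u.2 = z.2 + 1 ∧ z.1 < v.1 then -1
  else 0

section Winding

variable {M : Set (ℤ × ℤ)}

def winding (z : ℤ × ℤ) {u v : M} (p : (triGrid.induce M).Walk u v) : ℤ :=
  (p.darts.map fun d => rayCrossing z d.fst d.snd).sum

@[simp] lemma winding_nil (z : ℤ × ℤ) (u : M) :
    winding z (Walk.nil : (triGrid.induce M).Walk u u) = 0 :=
  rfl

@[simp] lemma winding_cons (z : ℤ × ℤ) {u v w : M} (h : (triGrid.induce M).Adj u v)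
    (p : (triGrid.induce M).Walk v w) :
    winding z (Walk.cons h p) = rayCrossing z u v + winding z p := by
  simp [winding]

@[simp] lemma winding_append (z : ℤ × ℤ) {u v w : M} (p : (triGrid.induce M).Walk u v)
    (q : (triGrid.induce M).Walk v w) : winding z (p.append q) = winding z p + winding z q := by
  simp [winding]

lemma winding_eq_sub {z : ℤ × ℤ} {u v : M} (p : (triGrid.induce M).Walk u v) (F : ℤ × ℤ → ℤ)
    (hF : ∀ x ∈ p.support, ∀ y ∈ p.support, triGrid.Adj x y →
      rayCrossing z x y = F y - F x) : winding z p = F v - F u :=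
  p.sum_map_darts_eq_sub _ (fun x => F x) fun d hd =>
    hF _ (p.dart_fst_mem_support_of_mem_darts hd) _ (p.dart_snd_mem_support_of_mem_darts hd) d.adj

lemma winding_eq_zero_of_forall_snd_ne {z : ℤ × ℤ} {u v : M} (p : (triGrid.induce M).Walk u v)
    (hp : ∀ x ∈ p.support, (x : ℤ × ℤ).2 ≠ z.2) : winding z p = 0 := by
  rw [winding_eq_sub p (fun _ => 0) fun x hx y hy _ => ?_, sub_self]
  have := hp x hx
  have := hp y hy
  simp only [rayCrossing]
  split_ifs <;> omega

lemma winding_eq_zero_of_forall_lt {z : ℤ × ℤ} {u v : M} (p : (triGrid.induce M).Walk u v)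
    (hp : ∀ x ∈ p.support, (x : ℤ × ℤ).2 = z.2 + 1 → (x : ℤ × ℤ).1 < z.1) :
    winding z p = 0 := by
  rw [winding_eq_sub p (fun _ => 0) fun x hx y hy hxy => ?_, sub_self]
  have := hp x hx
  have := hp y hy
  have := triGrid_adj_iff.mp hxy
  simp only [rayCrossing]
  split_ifs <;> omega

lemma winding_eq_zero_of_forall_gt {z : ℤ × ℤ} {u : M} (p : (triGrid.induce M).Walk u u)
    (hp : ∀ x ∈ p.support, z.1 < (x : ℤ × ℤ).1) : winding z p = 0 := by
  rw [winding_eq_sub p (fun x => if z.2 < x.2 then 1 else 0) fun x hx y hy hxy => ?_,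
    sub_self]
  have := hp x hx
  have := hp y hy
  have := triGrid_adj_iff.mp hxy
  simp only [rayCrossing]
  split_ifs <;> omega

lemma winding_sub_winding_eq {z z' : ℤ × ℤ} {u v : M} (p : (triGrid.induce M).Walk u v)
    (F : ℤ × ℤ → ℤ) (hF : ∀ x ∈ p.support, ∀ y ∈ p.support, triGrid.Adj x y →
      rayCrossing z x y - rayCrossing z' x y = F y - F x) :
    winding z p - winding z' p = F v - F u := by
  induction p with
  | nil => simp
  | cons h p ih =>
    have hstep := hF _ p.support.mem_cons_self _ (List.mem_cons_of_mem _ p.start_mem_support) h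
    have hrest := ih fun x hx y hy =>
      hF x (List.mem_cons_of_mem _ hx) y (List.mem_cons_of_mem _ hy)
    simp only [winding_cons]
    linarith

end Winding

lemma exists_rayCrossing_sub_eq_of_sub {z z' : ℤ × ℤ}
    (h : z' - z = (1, 0) ∨ z' - z = (0, 1) ∨ z' - z = (1, -1)) :
    ∃ F : ℤ × ℤ → ℤ, ∀ u v, triGrid.Adj u v → u ≠ z → u ≠ z' → v ≠ z → v ≠ z' →
      rayCrossing z u v - rayCrossing z' u v = F v - F u := by
  obtain ⟨z₁, z₂⟩ := z
  obtain ⟨z₁', z₂'⟩ := z'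
  simp only [Prod.mk_sub_mk, Prod.mk.injEq] at h
  rcases h with ⟨h₁, h₂⟩ | ⟨h₁, h₂⟩ | ⟨h₁, h₂⟩
  -- `F` is the signed indicator of the part of a row lying between the two rays
  on_goal 1 => refine ⟨fun _ => 0, ?_⟩
  on_goal 2 => refine ⟨fun t => if t.2 = z₂ + 1 ∧ z₁ < t.1 then 1 else 0, ?_⟩
  on_goal 3 => refine ⟨fun t => if t.2 = z₂ ∧ z₁ < t.1 then -1 else 0, ?_⟩
  all_goals
    rintro ⟨u₁, u₂⟩ ⟨v₁, v₂⟩ huv hu hu' hv hv'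
    simp only [ne_eq, Prod.mk.injEq] at hu hu' hv hv'
    rcases triGrid_adj_iff.mp huv with
      ⟨h₃, h₄⟩ | ⟨h₃, h₄⟩ | ⟨h₃, h₄⟩ | ⟨h₃, h₄⟩ | ⟨h₃, h₄⟩ | ⟨h₃, h₄⟩ <;>
      simp only at h₃ h₄ <;> subst h₃ h₄ <;> simp only [rayCrossing] <;> split_ifs <;> omega

lemma exists_rayCrossing_sub_eq {z z' : ℤ × ℤ} (h : triGrid.Adj z z') :
    ∃ F : ℤ × ℤ → ℤ, ∀ u v, triGrid.Adj u v → u ≠ z → u ≠ z' → v ≠ z → v ≠ z' →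
      rayCrossing z u v - rayCrossing z' u v = F v - F u := by
  have hdir : (z' - z = (1, 0) ∨ z' - z = (0, 1) ∨ z' - z = (1, -1)) ∨
      (z - z' = (1, 0) ∨ z - z' = (0, 1) ∨ z - z' = (1, -1)) := by
    simp only [triGrid, Prod.ext_iff, Prod.fst_sub, Prod.snd_sub] at h ⊢
    omega
  rcases hdir with hdir | hdir
  · exact exists_rayCrossing_sub_eq_of_sub hdir
  · obtain ⟨F, hF⟩ := exists_rayCrossing_sub_eq_of_sub hdir
    refine ⟨-F, fun u v huv hu hu' hv hv' => ?_⟩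
    have := hF u v huv hu' hu hv' hv
    simp only [Pi.neg_apply]
    linarith

section HoleFree

variable {M : Set (ℤ × ℤ)}

lemma winding_eq_of_adj {z z' : ℤ × ℤ} (hz : z ∉ M) (hz' : z' ∉ M) (h : triGrid.Adj z z')
    {u : M} (p : (triGrid.induce M).Walk u u) : winding z p = winding z' p := by
  obtain ⟨F, hF⟩ := exists_rayCrossing_sub_eq h
  have := winding_sub_winding_eq p F fun x _ y _ hxy =>
    hF x y hxy (ne_of_mem_of_not_mem x.2 hz) (ne_of_mem_of_not_mem x.2 hz')
      (ne_of_mem_of_not_mem y.2 hz) (ne_of_mem_of_not_mem y.2 hz')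
  linarith

lemma winding_eq_of_reachable {z z' : ↥Mᶜ} (h : (triGrid.induce Mᶜ).Reachable z z') {u : M}
    (p : (triGrid.induce M).Walk u u) : winding z p = winding z' p := by
  obtain ⟨q⟩ := h
  induction q with
  | nil => rfl
  | @cons a b _ h _ ih => exact (winding_eq_of_adj a.2 b.2 h p).trans ih

lemma finite_setOf_winding_ne_zero {u : M} (p : (triGrid.induce M).Walk u u) :
    {z | winding z p ≠ 0}.Finite := by
  obtain ⟨B, hB⟩ := ((p.support.toFinset : Set M).toFinite.image
    fun x : M => |(x : ℤ × ℤ).1| + |(x : ℤ × ℤ).2|).bddAbove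
  refine ((Set.finite_Icc (-B) B).prod (Set.finite_Icc (-B) B)).subset fun z hz => ?_
  have hbound : ∀ x ∈ p.support, -B ≤ (x : ℤ × ℤ).1 ∧ (x : ℤ × ℤ).1 ≤ B ∧
      -B ≤ (x : ℤ × ℤ).2 ∧ (x : ℤ × ℤ).2 ≤ B := fun x hx => by
    have := hB ⟨x, by simpa using hx, rfl⟩
    have := abs_le.mp (show |(x : ℤ × ℤ).1| ≤ B by linarith [abs_nonneg (x : ℤ × ℤ).2])
    have := abs_le.mp (show |(x : ℤ × ℤ).2| ≤ B by linarith [abs_nonneg (x : ℤ × ℤ).1])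
    omega
  by_contra hout
  simp only [Set.mem_prod, Set.mem_Icc, not_and_or, not_le] at hout
  apply hz
  rcases hout with (hout | hout) | hout
  · exact winding_eq_zero_of_forall_gt p fun x hx => by have := hbound x hx; omega
  · exact winding_eq_zero_of_forall_lt p fun x hx _ => by have := hbound x hx; omega
  · exact winding_eq_zero_of_forall_snd_ne p fun x hx => by have := hbound x hx; omega

theorem HoleFree.winding_eq_zero (hM : HoleFree M) {u : M} (p : (triGrid.induce M).Walk u u)
    {z : ℤ × ℤ} (hz : z ∉ M) : winding z p = 0 := by
  let C := (triGrid.induce Mᶜ).connectedComponentMk ⟨z, hz⟩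
  obtain ⟨_, ⟨y, hyC, rfl⟩, hy⟩ := ((hM C).image Subtype.val_injective.injOn).sdiff
    (finite_setOf_winding_ne_zero p) |>.nonempty
  rw [winding_eq_of_reachable (ConnectedComponent.exact hyC).symm p]
  simpa using hy

end HoleFree

section Portals

variable {M : Set (ℤ × ℤ)} {e : ℤ × ℤ}

lemma portalMk_eq_of_mem_support {u v x : M} (w : (portalLineGraph M e).Walk u v)
    (hx : x ∈ w.support) : portalMk M e x = portalMk M e u := by
  classical
  exact (ConnectedComponent.sound ⟨w.takeUntil x hx⟩).symm

lemma exists_portalWalk {u v : M} (p : (triGrid.induce M).Walk u v) :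
    ∃ q : (portalGraph M e).Walk (portalMk M e u) (portalMk M e v),
      ∀ P ∈ q.support, ∃ x ∈ p.support, portalMk M e x = P := by
  induction p with
  | nil => exact ⟨.nil, by simp⟩
  | @cons a b _ h p ih =>
    obtain ⟨q, hq⟩ := ih
    by_cases hab : portalMk M e a = portalMk M e b
    · refine ⟨q.copy hab.symm rfl, fun P hP => ?_⟩
      obtain ⟨x, hx, rfl⟩ := hq P (by simpa using hP)
      exact ⟨x, List.mem_cons_of_mem _ hx, rfl⟩
    · refine ⟨.cons ⟨hab, a, b, h, rfl, rfl⟩ q, fun P hP => ?_⟩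
      rcases List.mem_cons.mp hP with rfl | hP
      · exact ⟨a, p.support.mem_cons_self, rfl⟩
      · obtain ⟨x, hx, rfl⟩ := hq P hP
        exact ⟨x, List.mem_cons_of_mem _ hx, rfl⟩

lemma exists_walk_of_portalWalk {P Q : Portal M e} (q : (portalGraph M e).Walk P Q) {u v : M}
    (hu : portalMk M e u = P) (hv : portalMk M e v = Q) :
    ∃ p : (triGrid.induce M).Walk u v, ∀ x ∈ p.support, portalMk M e x ∈ q.support := by
  have hle : portalLineGraph M e ≤ triGrid.induce M := fun _ _ h => h.1
  induction q generalizing u with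
  | nil =>
    obtain ⟨w⟩ := ConnectedComponent.exact (hu.trans hv.symm)
    refine ⟨w.mapLe hle, fun x hx => ?_⟩
    rw [Walk.support_mapLe_eq_support] at hx
    simp [portalMk_eq_of_mem_support w hx, hu]
  | cons h q ih =>
    obtain ⟨-, a, b, hab, ha, hb⟩ := h
    obtain ⟨w⟩ := ConnectedComponent.exact (hu.trans ha.symm)
    obtain ⟨p, hp⟩ := ih hb hv
    refine ⟨(w.mapLe hle).append (.cons hab p), fun x hx => ?_⟩
    rw [Walk.mem_support_append_iff, Walk.support_mapLe_eq_support] at hx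
    rcases hx with hx | hx
    · simp [portalMk_eq_of_mem_support w hx, hu]
    · rcases List.mem_cons.mp hx with rfl | hx
      · simp [ha]
      · exact List.mem_cons_of_mem _ (hp x hx)

end Portals

section RowPortals

variable {M : Set (ℤ × ℤ)}

lemma portalLineGraph_horizontal_adj {u v : M} (h : (portalLineGraph M (1, 0)).Adj u v) :
    u.val.2 = v.val.2 ∧ (u.val.1 = v.val.1 + 1 ∨ v.val.1 = u.val.1 + 1) := by
  rcases h.2 with h | h <;> simp only [Prod.ext_iff, Prod.fst_sub, Prod.snd_sub] at h <;> omega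

lemma snd_eq_of_portalMk_eq {u v : M} (h : portalMk M (1, 0) u = portalMk M (1, 0) v) :
    u.val.2 = v.val.2 := by
  obtain ⟨w⟩ := ConnectedComponent.exact h
  clear h
  induction w with
  | nil => rfl
  | cons hadj _ ih => exact (portalLineGraph_horizontal_adj hadj).1.trans ih

lemma portalMk_eq_of_adj_of_snd_eq {u v : M} (h : triGrid.Adj u v) (hrow : u.val.2 = v.val.2) :
    portalMk M (1, 0) u = portalMk M (1, 0) v := by
  refine ConnectedComponent.sound (Adj.reachable ⟨h, ?_⟩)
  have := triGrid_adj_iff.mp h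
  simp only [Prod.ext_iff, Prod.fst_sub, Prod.snd_sub]
  omega

lemma snd_add_one_eq_of_portalMk_ne {u v : M} (h : triGrid.Adj u v) (hle : v.val.2 ≤ u.val.2)
    (hne : portalMk M (1, 0) u ≠ portalMk M (1, 0) v) : v.val.2 + 1 = u.val.2 := by
  have := triGrid_adj_iff.mp h
  have := mt (portalMk_eq_of_adj_of_snd_eq h) hne
  omega

lemma exists_mem_support_fst_eq {u v : M} (w : (portalLineGraph M (1, 0)).Walk u v) {c : ℤ}
    (hu : u.val.1 ≤ c) (hv : c ≤ v.val.1) : ∃ x ∈ w.support, x.val.1 = c := by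
  induction w with
  | nil => exact ⟨_, List.mem_singleton_self _, le_antisymm hu hv⟩
  | @cons a b _ h w ih =>
    by_cases hb : b.val.1 ≤ c
    · obtain ⟨x, hx, hxc⟩ := ih hb hv
      exact ⟨x, List.mem_cons_of_mem _ hx, hxc⟩
    · have := (portalLineGraph_horizontal_adj h).2
      exact ⟨a, w.support.mem_cons_self, by omega⟩

lemma add_two_le_of_portalMk_ne {x a p : M} (hrow : x.val.2 = a.val.2)
    (hne : portalMk M (1, 0) x ≠ portalMk M (1, 0) a) (hlt : x.val.1 < a.val.1)
    (hp : portalMk M (1, 0) p = portalMk M (1, 0) a) : x.val.1 + 2 ≤ p.val.1 := by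
  by_contra! hpx
  -- otherwise the portal of `a` contains the right neighbour of `x`
  obtain ⟨w⟩ := ConnectedComponent.exact hp
  obtain ⟨m, hm, hmx⟩ := exists_mem_support_fst_eq w (c := x.val.1 + 1) (by omega) (by omega)
  have hmp := portalMk_eq_of_mem_support w hm
  have hmrow : m.val.2 = x.val.2 := by
    rw [snd_eq_of_portalMk_eq (hmp.trans hp), hrow]
  refine hne ((portalMk_eq_of_adj_of_snd_eq ?_ hmrow.symm).trans (hmp.trans hp))
  simp only [triGrid, Prod.ext_iff, Prod.fst_sub, Prod.snd_sub]
  omega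

lemma exists_notMem_between {b d : M} (hrow : b.val.2 = d.val.2)
    (hne : portalMk M (1, 0) b ≠ portalMk M (1, 0) d) (hlt : b.val.1 < d.val.1) :
    ∃ z ∉ M, z.2 = b.val.2 ∧ b.val.1 < z.1 ∧ z.1 < d.val.1 := by
  -- `r` is the right end of the part of the portal of `b` left of `d`
  obtain ⟨r, ⟨hbr, hrd, u, hub, hu⟩, hmax⟩ := Int.exists_greatest_of_bdd
    (P := fun x => b.val.1 ≤ x ∧ x < d.val.1 ∧
      ∃ u : M, portalMk M (1, 0) u = portalMk M (1, 0) b ∧ u.val = (x, b.val.2))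
    ⟨d.val.1, fun _ h => h.2.1.le⟩ ⟨b.val.1, le_rfl, hlt, b, rfl, rfl⟩
  have hz : (r + 1, b.val.2) ∉ M := by
    intro hz
    have hzu : portalMk M (1, 0) ⟨_, hz⟩ = portalMk M (1, 0) b := by
      refine (portalMk_eq_of_adj_of_snd_eq ?_ (by simp [hu])).trans hub
      simp only [triGrid, hu, Prod.ext_iff, Prod.fst_sub, Prod.snd_sub]
      omega
    rcases (show r + 1 < d.val.1 ∨ r + 1 = d.val.1 by omega) with hrd' | hrd'
    · have := hmax (r + 1) ⟨by omega, hrd', _, hzu, rfl⟩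
      omega
    · refine hne (hzu.symm.trans (congrArg _ (Subtype.ext ?_)))
      simp [hrd', hrow]
  refine ⟨_, hz, rfl, show b.val.1 < r + 1 by omega, show r + 1 < d.val.1 from ?_⟩
  refine lt_of_le_of_ne hrd fun hrd' => hz ?_
  rw [show (r + 1, b.val.2) = d.val from Prod.ext hrd' hrow]
  exact d.2

end RowPortals

section Acyclic

variable {M : Set (ℤ × ℤ)}

/-- The closed walk `a₁ → b ⇝ d → a₂ ⇝ a₁` winds once around a point outside `M` between `b`
and `d`. -/
lemma HoleFree.false_of_arch (hM : HoleFree M) {a₁ a₂ b d : M}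
    (ha : portalMk M (1, 0) a₁ = portalMk M (1, 0) a₂) (hab : triGrid.Adj a₁ b)
    (hda : triGrid.Adj d a₂) (hb : b.val.2 + 1 = a₁.val.2) (hd : d.val.2 + 1 = a₁.val.2)
    (hbd : portalMk M (1, 0) b ≠ portalMk M (1, 0) d) (hlt : b.val.1 < d.val.1)
    (W : (triGrid.induce M).Walk b d)
    (hW : ∀ x ∈ W.support, x.val.2 = a₁.val.2 → x.val.1 < a₁.val.1) : False := by
  obtain ⟨z, hz, hzb, hbz, hzd⟩ := exists_notMem_between (by omega) hbd hlt
  obtain ⟨L, hL⟩ :=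
    exists_walk_of_portalWalk (Walk.nil : (portalGraph M (1, 0)).Walk _ _) ha.symm rfl
  have ha₂ := snd_eq_of_portalMk_eq ha
  have hab_coords := triGrid_adj_iff.mp hab
  have hW0 : winding z W = 0 :=
    winding_eq_zero_of_forall_lt W fun x hx hx₂ => by have := hW x hx (by omega); omega
  have hL0 : winding z L = 0 := winding_eq_zero_of_forall_snd_ne L fun x hx => by
    have := snd_eq_of_portalMk_eq (List.mem_singleton.mp (hL x hx))
    omega
  have hloop := hM.winding_eq_zero
    (.cons (induce_adj.mpr hab) (W.append (.cons (induce_adj.mpr hda) L))) hz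
  simp only [winding_cons, winding_append, hW0, hL0, rayCrossing] at hloop
  split_ifs at hloop <;> omega

theorem portalGraph_horizontal_isAcyclic (hfin : M.Finite) (hM : HoleFree M) :
    (portalGraph M (1, 0)).IsAcyclic := by
  intro P₀ c hc
  have : Finite M := hfin.to_subtype
  obtain ⟨x₀, rfl⟩ := P₀.exists_rep
  obtain ⟨a, ha, hmax⟩ := Set.exists_max_image {x : M | portalMk M (1, 0) x ∈ c.support}
    (fun x : M => toLex (x.val.2, x.val.1)) (Set.toFinite _) ⟨x₀, c.start_mem_support⟩
  obtain ⟨_, _, ⟨-, a₁, b, hab, ha₁, rfl⟩, ⟨-, d, a₂, hda, rfl, ha₂⟩, hbd, r, hr⟩ :=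
    hc.exists_adj_adj_walk ha
  obtain ⟨W, hW⟩ := exists_walk_of_portalWalk r rfl rfl
  have hW_left : ∀ x ∈ W.support, x.val.2 ≤ a.val.2 ∧
      (x.val.2 = a.val.2 → x.val.1 < a₁.val.1 ∧ x.val.1 < a₂.val.1) := by
    intro x hx
    obtain ⟨hxc, hxa⟩ := hr _ (hW x hx)
    have hxa' := Prod.Lex.toLex_le_toLex.mp (hmax x hxc)
    refine ⟨by omega, fun hrow => ?_⟩
    have hlt : x.val.1 < a.val.1 := lt_of_le_of_ne (by omega) fun h =>
      hxa (congrArg _ (Subtype.ext (Prod.ext h hrow)))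
    have := add_two_le_of_portalMk_ne hrow hxa hlt ha₁
    have := add_two_le_of_portalMk_ne hrow hxa hlt ha₂
    omega
  have hrow₁ := snd_eq_of_portalMk_eq ha₁
  have hrow₂ := snd_eq_of_portalMk_eq ha₂
  have hb := snd_add_one_eq_of_portalMk_ne hab (by linarith [(hW_left b W.start_mem_support).1])
    fun h => (hr _ (hW b W.start_mem_support)).2 (h.symm.trans ha₁)
  have hd := snd_add_one_eq_of_portalMk_ne hda.symm (by linarith [(hW_left d W.end_mem_support).1])
    fun h => (hr _ (hW d W.end_mem_support)).2 (h.symm.trans ha₂)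
  rcases lt_trichotomy b.val.1 d.val.1 with hlt | heq | hgt
  · exact hM.false_of_arch (ha₁.trans ha₂.symm) hab hda hb (by omega) hbd hlt W
      fun x hx hrow => ((hW_left x hx).2 (by omega)).1
  · exact hbd (congrArg _ (Subtype.ext (Prod.ext heq (by omega))))
  · exact hM.false_of_arch (ha₂.trans ha₁.symm) hda.symm hab.symm hd (by omega) (Ne.symm hbd)
      hgt W.reverse fun x hx hrow => ((hW_left x (by simpa using hx)).2 (by omega)).2

end Acyclic

def triGridReflection : triGrid ≃g triGrid where
  toEquiv := Equiv.prodComm ℤ ℤ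
  map_rel_iff' {u v} := by
    simp only [Equiv.prodComm_apply, triGrid_adj_iff, Prod.fst_swap, Prod.snd_swap]
    omega

def triGridRotation : triGrid ≃g triGrid where
  toFun p := (-p.2, p.1 + p.2)
  invFun p := (p.1 + p.2, -p.1)
  left_inv p := by simp
  right_inv p := by simp
  map_rel_iff' {u v} := by
    simp only [Equiv.coe_fn_mk, triGrid_adj_iff]
    omega

lemma HoleFree.image (φ : triGrid ≃g triGrid) {M : Set (ℤ × ℤ)} (hM : HoleFree M) :
    HoleFree (φ '' M) := by
  have hbij : Set.BijOn φ Mᶜ (φ '' M)ᶜ := by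
    rw [← Set.image_compl_eq φ.bijective]
    exact φ.injective.injOn.bijOn_image
  let ψ := φ.induce hbij
  intro C
  rw [← ψ.connectedComponentEquiv.apply_symm_apply C]
  exact Set.infinite_coe_iff.mp ((ConnectedComponent.isoEquivSupp ψ _).infinite_iff.mp
    (Set.infinite_coe_iff.mpr (hM _)))

lemma portalGraph_isAcyclic_of_iso (φ : triGrid ≃g triGrid) {M : Set (ℤ × ℤ)} {e e' : ℤ × ℤ}
    (hφ : ∀ u v, φ u - φ v = e' ↔ u - v = e) (h : (portalGraph (φ '' M) e').IsAcyclic) :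
    (portalGraph M e).IsAcyclic := by
  have hcoe (u : M) : (φ.toEquiv.image M u : ℤ × ℤ) = φ u := rfl
  let ψ : portalLineGraph M e ≃g portalLineGraph (φ '' M) e' :=
    { toEquiv := φ.toEquiv.image M
      map_rel_iff' := by
        intro u v
        simp [portalLineGraph, hcoe, hφ, φ.map_adj_iff] }
  let Ψ : portalGraph M e →g portalGraph (φ '' M) e' :=
    { toFun := ψ.connectedComponentEquiv
      map_rel' := by
        rintro _ _ ⟨hne, u, v, huv, rfl, rfl⟩
        exact ⟨ψ.connectedComponentEquiv.injective.ne hne, ψ u, ψ v, φ.map_adj_iff.mpr huv,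
          rfl, rfl⟩ }
  exact h.comap Ψ ψ.connectedComponentEquiv.injective

theorem portalGraph_isAcyclic {M : Set (ℤ × ℤ)} (hfin : M.Finite) (hM : HoleFree M) {e : ℤ × ℤ}
    (he : e ∈ ({(1, 0), (0, 1), (1, -1)} : Set (ℤ × ℤ))) : (portalGraph M e).IsAcyclic := by
  have hiso (φ : triGrid ≃g triGrid) (hφ : ∀ u v, φ u - φ v = (1, 0) ↔ u - v = e) :=
    portalGraph_isAcyclic_of_iso φ hφ
      (portalGraph_horizontal_isAcyclic (hfin.image φ) (hM.image φ))
  rcases he with rfl | rfl | rfl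
  · exact portalGraph_horizontal_isAcyclic hfin hM
  · exact hiso triGridReflection fun u v => by
      simp [triGridReflection, Prod.ext_iff]
      omega
  · exact hiso triGridRotation fun u v => by
      simp [triGridRotation, Prod.ext_iff]
      omega

theorem middle_set_separates_general (M : Set (ℤ × ℤ)) (hfin : M.Finite)
    (hsimple : HoleFree M)
    (g g' : M) (e : ℤ × ℤ) (he : e ∈ ({(1, 0), (0, 1), (1, -1)} : Set (ℤ × ℤ))) :
    ∀ p : (triGrid.induce M).Walk g g', ∃ w ∈ p.support,
      portalDist M e g w = (portalDist M e g g' + 1) / 2 ∧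
      portalDist M e g' w = portalDist M e g g' / 2 := by
  intro p
  set k := (portalDist M e g g' + 1) / 2
  obtain ⟨q, hq⟩ := exists_portalWalk (e := e) p
  obtain ⟨r, hr⟩ := q.reachable.exists_walk_length_eq_dist
  obtain ⟨hgm, hmg'⟩ := r.dist_getVert_of_length_eq_dist hr (k := k)
    (by rw [hr]; simp only [k, portalDist]; omega)
  have hmid := (portalGraph_isAcyclic hfin hsimple he).support_subset_support_of_isPath
    (r.isPath_of_length_eq_dist hr) q (r.getVert_mem_support k)
  obtain ⟨w, hw, hwm⟩ := hq _ hmid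
  refine ⟨w, hw, ?_, ?_⟩
  · rw [portalDist, hwm, hgm]
  · rw [portalDist, hwm, SimpleGraph.dist_comm, hmg', ← portalDist]
    omega

/-- For a finite, connected, hole-free `M` and `g, g' ∈ M`, every path from
`g` to `g'` in the subgraph induced on `M` contains a vertex of the set
`P_q = {v ∈ M : d_{M,q}(g,v) = ⌈d_q/2⌉ ∧ d_{M,q}(g',v) = ⌊d_q/2⌋}`. -/
theorem middle_set_separates (M : Set (ℤ × ℤ)) (hfin : M.Finite)
    (hconn : (triGrid.induce M).Connected) (hsimple : HoleFree M)
    (g g' : M) (e : ℤ × ℤ) (he : e ∈ ({(1, 0), (0, 1), (1, -1)} : Set (ℤ × ℤ))) :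
    ∀ p : (triGrid.induce M).Walk g g', ∃ w ∈ p.support,
      portalDist M e g w = (portalDist M e g g' + 1) / 2 ∧
      portalDist M e g' w = portalDist M e g g' / 2 :=
  middle_set_separates_general M hfin hsimple g g' e he
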